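/- If v ∈ S and r = r((K,t),S), then c(i,(K,t),S) equals: i(i+1)/2 if r ≥ max{0, −(i+1)}; (i+1)(i+2)/2 if r ≤ min{0, −(i+1)}; (i+1)(i+2)/2 + r if 0 ≤ r ≤ −(i+1); and i(i+1)/2 − r if −(i+1) ≤ r ≤ 0. -/

import Mathlib

/-!
Common setup: the lattice cohomology complex of a weighted graph
(Némethi; J. Greene, "A surgery triangle for lattice cohomology").

A finite graph `G` with integer weights on vertices and signs on (multi-)edges is
encoded by its symmetric incidence data `M : V → V → ℤ`: for `u ≠ w` the entry
`M u w` is the signed number of edges joining `u` and `w`, and `M u u = m(u)` is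
the weight of `u`.  This is exactly the data of the intersection pairing `(·,·)`
on `L(G) = ℤ⟨E_u : u ∈ V⟩`, via `M u w = (E_u, E_w)`.
-/

noncomputable section

open Function

/-- A graph with integer vertex weights and signed multi-edges, encoded by the
symmetric pairing data `M u w = (E_u, E_w)` on `L(G)`. -/
structure WGraph (V : Type*) where
  M : V → V → ℤ
  symm : ∀ u w, M u w = M w u

variable {V : Type*} [Fintype V] [DecidableEq V]

/-- Evaluation of `K ∈ Hom(L(G), ℤ)` (recorded by its components `K u = K(E_u)`)
on a lattice vector `x = ∑ x_u E_u ∈ L(G)`. -/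
def evalK (K x : V → ℤ) : ℤ := ∑ u, K u * x u

/-- `E_T = ∑_{j ∈ T} E_j ∈ L(G)`. -/
def eVec (T : Finset V) : V → ℤ := fun u => if u ∈ T then 1 else 0

/-- Splitting a sum over `V` at a vertex `v`. -/
theorem sum_split (v : V) (f : V → ℤ) :
    ∑ u, f u = f v + ∑ u : {u : V // u ≠ v}, f u.1 := by
  rw [Fintype.sum_eq_add_sum_compl v f]
  congr 1
  exact Finset.sum_subtype _ (fun x => by simp) f

namespace WGraph

/-- The symmetric bilinear pairing `(x, y)` on `L(G)`. -/
def pair (G : WGraph V) (x y : V → ℤ) : ℤ := ∑ u, ∑ w, G.M u w * x u * y w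

/-- `K ∈ Hom(L(G),ℤ)` is characteristic: `(K,x) ≡ (x,x) (mod 2)` for all `x ∈ L(G)`. -/
def IsChar (G : WGraph V) (K : V → ℤ) : Prop :=
  ∀ x : V → ℤ, evalK K x ≡ G.pair x x [ZMOD 2]

/-- The set `Char(G)` of characteristic vectors, as a type. -/
def Ch (G : WGraph V) : Type _ := {K : V → ℤ // G.IsChar K}

/-- `K + 2x ∈ Hom(L(G),ℤ)`, for `K ∈ Hom(L(G),ℤ)` and `x ∈ L(G)` (a lattice vector
is viewed in `Hom(L(G),ℤ)` via the pairing). -/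
def chAdd (G : WGraph V) (K x : V → ℤ) : V → ℤ := fun u => K u + 2 * G.pair x (eVec {u})

/-- The difference `q(K + 2x) − q(K) = −((K,x) + (x,x))/2`, where `q(y) = −(y,y)/8`;
it is an integer whenever `K` is characteristic. -/
def qdiff (G : WGraph V) (K x : V → ℤ) : ℤ := (-(evalK K x + G.pair x x)) / 2

/-- The difference `q(K,S) − q(K) = max { q(K + 2E_T) − q(K) : T ⊆ S }`, where
`q(K,S) = max { q(K + 2 ∑_{j∈T} E_j) : T ⊆ S }`. -/
def qrel (G : WGraph V) (K : V → ℤ) (S : Finset V) : ℤ :=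
  S.powerset.sup' (Finset.powerset_nonempty S) fun T => G.qdiff K (eVec T)

/-- `G₊₁(v)`: increase the weight `m(v)` of the vertex `v` by one. -/
def bump (G : WGraph V) (v : V) : WGraph V where
  M u w := if u = v ∧ w = v then G.M u w + 1 else G.M u w
  symm u w := by
    have h := G.symm u w
    by_cases hu : u = v <;> by_cases hw : w = v <;> simp [hu, hw, h] <;>
      exact G.symm _ _

/-- `G − v`: delete the vertex `v` and all incident edges. -/
def delete (G : WGraph V) (v : V) : WGraph {u : V // u ≠ v} where
  M u w := G.M u.1 w.1
  symm u w := G.symm u.1 w.1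

theorem evalK_update (L y : V → ℤ) (v : V) (c : ℤ) :
    evalK (Function.update L v (L v + c)) y = evalK L y + c * y v := by
  unfold evalK
  have h : ∀ u, Function.update L v (L v + c) u * y u
      = L u * y u + (if u = v then c * y u else 0) := by
    intro u
    rcases eq_or_ne u v with hu | hu <;> simp [hu, Function.update] <;> ring
  simp only [h]
  rw [Finset.sum_add_distrib, Finset.sum_ite_eq' Finset.univ v (fun u => c * y u)]
  simp

theorem IsChar.chAdd {G : WGraph V} {K : V → ℤ} (h : G.IsChar K) (x : V → ℤ) :
    G.IsChar (G.chAdd K x) := by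
  intro y
  have key : evalK (G.chAdd K x) y
      = evalK K y + 2 * ∑ u, G.pair x (eVec {u}) * y u := by
    simp only [evalK, WGraph.chAdd, add_mul, mul_assoc]
    rw [Finset.sum_add_distrib, ← Finset.mul_sum]
  have hy := h y
  simp only [Int.ModEq] at hy ⊢
  rw [key]
  omega

theorem pair_bump (G : WGraph V) (v : V) (y : V → ℤ) :
    (G.bump v).pair y y = G.pair y y + y v * y v := by
  unfold pair bump
  have hu : ∀ u w : V, ((if u = v ∧ w = v then G.M u w + 1 else G.M u w) * y u * y w)
      = G.M u w * y u * y w + (if u = v ∧ w = v then y u * y w else 0) := by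
    intro u w
    rcases eq_or_ne u v with h | h <;> rcases eq_or_ne w v with h' | h' <;>
      simp [h, h'] <;> ring
  simp only [hu, Finset.sum_add_distrib]
  congr 1
  have hin : ∀ u : V, (∑ w, if u = v ∧ w = v then y u * y w else 0)
      = if u = v then y u * y v else 0 := by
    intro u
    rcases eq_or_ne u v with h | h
    · simp [h, Finset.sum_ite_eq' Finset.univ v (fun w => y v * y w)]
    · simp [h]
  rw [Finset.sum_congr rfl (fun u _ => hin u),
    Finset.sum_ite_eq' Finset.univ v (fun u => y u * y v)]
  simp

theorem IsChar.bumpUpdate {G : WGraph V} {L : V → ℤ} (h : G.IsChar L) (v : V) (i : ℤ) :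
    (G.bump v).IsChar (Function.update L v (L v + (2 * i + 1))) := by
  intro y
  have h1 := evalK_update L y v (2 * i + 1)
  have h2 := pair_bump G v y
  have hy := h y
  obtain ⟨k, hk⟩ := Int.even_mul_succ_self (y v - 1)
  have hk' : y v * y v - y v = 2 * k := by
    have h5 : (y v - 1) * (y v - 1 + 1) = y v * y v - y v := by ring
    omega
  have h3 : (2 * i + 1) * y v = 2 * (i * y v) + y v := by ring
  simp only [Int.ModEq] at hy ⊢
  rw [h1, h2, h3]
  omega

theorem IsChar.evenUpdate {G : WGraph V} {L : V → ℤ} (h : G.IsChar L) (v : V) (k : ℤ) :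
    G.IsChar (Function.update L v (L v + 2 * k)) := by
  intro y
  have h1 := evalK_update L y v (2 * k)
  have hy := h y
  have h3 : 2 * k * y v = 2 * (k * y v) := by ring
  simp only [Int.ModEq] at hy ⊢
  rw [h1, h3]
  omega

end WGraph

/-- Extension of `K ∈ Hom(L(G−v),ℤ)` to `Hom(L(G),ℤ)` by the value `t` at `v`:
the vector denoted `(K, t)`. -/
def extV (v : V) (K : {u : V // u ≠ v} → ℤ) (t : ℤ) : V → ℤ :=
  fun u => if h : u = v then t else K ⟨u, h⟩

namespace WGraph

theorem IsChar.extChar {G : WGraph V} {v : V} {K : {u : V // u ≠ v} → ℤ}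
    (h : (G.delete v).IsChar K) {t : ℤ} (ht : t ≡ G.M v v [ZMOD 2]) :
    G.IsChar (extV v K t) := by
  intro y
  have h1 : evalK (extV v K t) y = t * y v + evalK K (fun u => y u.1) := by
    unfold evalK
    rw [sum_split v (fun u => extV v K t u * y u)]
    congr 1
    · simp [extV]
    · exact Finset.sum_congr rfl fun u _ => by simp [extV, u.2]
  have h2 : G.pair y y = (G.delete v).pair (fun u => y u.1) (fun u => y u.1)
      + G.M v v * (y v * y v)
      + 2 * ∑ u : {u : V // u ≠ v}, G.M v u.1 * y v * y u.1 := by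
    have step1 : G.pair y y = (∑ w, G.M v w * y v * y w)
        + ∑ u : {u : V // u ≠ v}, ∑ w, G.M u.1 w * y u.1 * y w :=
      sum_split v (fun u => ∑ w, G.M u w * y u * y w)
    have step2 : (∑ w, G.M v w * y v * y w)
        = G.M v v * y v * y v + ∑ w : {w : V // w ≠ v}, G.M v w.1 * y v * y w.1 :=
      sum_split v _
    have step3 : ∀ u : {u : V // u ≠ v}, (∑ w, G.M u.1 w * y u.1 * y w)
        = G.M u.1 v * y u.1 * y v + ∑ w : {w : V // w ≠ v}, G.M u.1 w.1 * y u.1 * y w.1 :=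
      fun u => sum_split v _
    have step4 : (G.delete v).pair (fun u => y u.1) (fun u => y u.1)
        = ∑ u : {u : V // u ≠ v}, ∑ w : {w : V // w ≠ v}, G.M u.1 w.1 * y u.1 * y w.1 := rfl
    have hc : (∑ u : {u : V // u ≠ v}, G.M u.1 v * y u.1 * y v)
        = ∑ u : {u : V // u ≠ v}, G.M v u.1 * y v * y u.1 := by
      refine Finset.sum_congr rfl fun u _ => ?_
      rw [G.symm u.1 v]; ring
    rw [step1, step2, Finset.sum_congr rfl (fun u _ => step3 u),
      Finset.sum_add_distrib, hc, step4]
    ring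
  have hy := h (fun u => y u.1)
  obtain ⟨k, hk⟩ := Int.even_mul_succ_self (y v - 1)
  have hk' : y v * y v - y v = 2 * k := by
    have h5 : (y v - 1) * (y v - 1 + 1) = y v * y v - y v := by ring
    omega
  obtain ⟨a, ha⟩ : (2:ℤ) ∣ t - G.M v v := Int.ModEq.dvd ht.symm
  have e1 : t * y v = G.M v v * y v + 2 * (a * y v) := by
    have h6 : t = G.M v v + 2 * a := by omega
    rw [h6]; ring
  have e2 : G.M v v * (y v * y v) = G.M v v * y v + 2 * (G.M v v * k) := by
    have h7 : y v * y v = y v + 2 * k := by omega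
    rw [h7]; ring
  simp only [Int.ModEq] at hy ⊢
  rw [h1, h2, e1, e2]
  omega

variable {G : WGraph V}

/-- `K + 2x` as a characteristic vector. -/
def Ch.add (K : G.Ch) (x : V → ℤ) : G.Ch := ⟨G.chAdd K.1 x, K.2.chAdd x⟩

/-- For `K = (K', t) ∈ Char(G)`, the characteristic vector
`(K', t + 2i + 1) ∈ Char(G₊₁(v))`. -/
def Ch.bumpSh (K : G.Ch) (v : V) (i : ℤ) : (G.bump v).Ch :=
  ⟨Function.update K.1 v (K.1 v + (2 * i + 1)), K.2.bumpUpdate v i⟩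

/-- For `K = (K', t) ∈ Char(G)`, the characteristic vector `(K', t + 2k) ∈ Char(G)`. -/
def Ch.evenSh (K : G.Ch) (v : V) (k : ℤ) : G.Ch :=
  ⟨Function.update K.1 v (K.1 v + 2 * k), K.2.evenUpdate v k⟩

/-- For `K ∈ Char(G−v)`, the characteristic vector `(K, m(v) + 2i) ∈ Char(G)`. -/
def Ch.extend {v : V} (K : (G.delete v).Ch) (i : ℤ) : G.Ch :=
  ⟨extV v K.1 (G.M v v + 2 * i),
    K.2.extChar (by show (G.M v v + 2 * i) % 2 = G.M v v % 2; omega)⟩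

end WGraph

/-- `𝒯⁺₀ = 𝔽[U,U⁻¹]/(U·𝔽[U])` over `𝔽 = ℤ/2ℤ`: the coefficient at `d ∈ ℕ` records
the coefficient of `U^{−d}`. -/
def Tplus : Type := ℕ →₀ ZMod 2

instance : AddCommGroup Tplus := inferInstanceAs (AddCommGroup (ℕ →₀ ZMod 2))
instance : Module (ZMod 2) Tplus := inferInstanceAs (Module (ZMod 2) (ℕ →₀ ZMod 2))

/-- The element `U^{-m}` of `𝒯⁺₀`. -/
def Um (m : ℕ) : Tplus := (Finsupp.single m 1 : ℕ →₀ ZMod 2)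

/-- Multiplication by `U^e` on `𝒯⁺₀`: `U^e · U^{−d} = U^{−(d−e)}` (which is `0` if `d < e`). -/
def Upow (e : ℤ) (f : Tplus) : Tplus :=
  (Finsupp.comapDomain (fun d : ℕ => (d : ℤ) + e)
    (Finsupp.embDomain ⟨(Nat.cast : ℕ → ℤ), Nat.cast_injective⟩ (f : ℕ →₀ ZMod 2))
    (fun a _ b _ hab => Nat.cast_injective (add_right_cancel hab)) : ℕ →₀ ZMod 2)

theorem Upow_zero (e : ℤ) : Upow e 0 = 0 := by
  show (Finsupp.comapDomain _ (Finsupp.embDomain _ (0 : ℕ →₀ ZMod 2)) _ : ℕ →₀ ZMod 2)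
    = (0 : ℕ →₀ ZMod 2)
  ext d
  simp

/-- `C⁺(G)`: the `𝔽[U]`-module of finitely supported maps `Char(G) × 𝒫(V) → 𝒯⁺₀`. -/
abbrev Cplus (G : WGraph V) : Type _ := (G.Ch × Finset V) →₀ Tplus

/-- The action of (multiplication by) `U` on `C⁺(G)`. -/
def UC (G : WGraph V) (φ : Cplus G) : Cplus G := Finsupp.mapRange (Upow 1) (Upow_zero 1) φ

/-- `U^{−m} · (K,S)^∨`: the element of `C⁺(G)` supported at the single pair `(K,S)`
with value `U^{−m}`. -/
def dual {G : WGraph V} (p : G.Ch × Finset V) (m : ℕ) : Cplus G :=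
  Finsupp.single p (Um m)

/-- The exponent `q(K,S) − q(K, S−w)`. -/
def dExp₁ (G : WGraph V) (K : V → ℤ) (S : Finset V) (w : V) : ℤ :=
  G.qrel K S - G.qrel K (S.erase w)

/-- The exponent `q(K,S) − q(K + 2E_w, S−w)`. -/
def dExp₂ (G : WGraph V) (K : V → ℤ) (S : Finset V) (w : V) : ℤ :=
  G.qrel K S - (G.qdiff K (eVec {w}) + G.qrel (G.chAdd K (eVec {w})) (S.erase w))

/-- `δ` is the operator on `C⁺(G)` given by
`δ(φ)(K,S) = ∑_{w∈S} [U^{q(K,S)−q(K,S−w)}·φ(K,S−w) + U^{q(K,S)−q(K+2E_w,S−w)}·φ(K+2E_w,S−w)]`. -/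
def IsDelta (G : WGraph V) (δ : Cplus G → Cplus G) : Prop :=
  ∀ (φ : Cplus G) (K : G.Ch) (S : Finset V),
    δ φ (K, S) = ∑ w ∈ S,
      (Upow (dExp₁ G K.1 S w) (φ (K, S.erase w))
        + Upow (dExp₂ G K.1 S w) (φ (K.add (eVec {w}), S.erase w)))

/-- The exponent
`c(i,(K,t),S) = [q((K,t),S) − q(K,t)] − [q'((K,t+2i+1),S) − q'(K,t+2i+1)] + i(i+1)/2`. -/
def cExp (G : WGraph V) (v : V) (i : ℤ) (K : G.Ch) (S : Finset V) : ℤ :=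
  G.qrel K.1 S - (G.bump v).qrel (K.bumpSh v i).1 S + i * (i + 1) / 2

/-- `A` is the map `C⁺(G₊₁(v)) → C⁺(G)` given by
`A(φ)((K,t),S) = ∑_{i∈ℤ} U^{c(i,(K,t),S)} · φ((K,t+2i+1),S)`. -/
def IsA (G : WGraph V) (v : V) (A : Cplus (G.bump v) → Cplus G) : Prop :=
  ∀ (φ : Cplus (G.bump v)) (K : G.Ch) (S : Finset V),
    A φ (K, S) = ∑ᶠ i : ℤ, Upow (cExp G v i K S) (φ (K.bumpSh v i, S))

/-- A subset `S ⊆ V − v` viewed as a subset of `V`. -/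
def liftS (v : V) (S : Finset {u : V // u ≠ v}) : Finset V :=
  S.map ⟨Subtype.val, Subtype.val_injective⟩

/-- `B` is the map `C⁺(G) → C⁺(G−v)` given by
`B(φ)(K,S) = ∑_{i∈ℤ} φ((K, m(v)+2i), S)`. -/
def IsB (G : WGraph V) (v : V) (B : Cplus G → Cplus (G.delete v)) : Prop :=
  ∀ (φ : Cplus G) (K : (G.delete v).Ch) (S : Finset {u : V // u ≠ v}),
    B φ (K, S) = ∑ᶠ i : ℤ, φ (K.extend i, liftS v S)

/-- `r((K,t),S) = q((K,t),S−v) − q((K,t)+2E_v,S−v)` (for `v ∈ S`). -/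
def rVal (G : WGraph V) (v : V) (K : G.Ch) (S : Finset V) : ℤ :=
  G.qrel K.1 (S.erase v)
    - (G.qdiff K.1 (eVec {v}) + G.qrel (G.chAdd K.1 (eVec {v})) (S.erase v))

/-- The lattice cohomology `ℍ⁺`: the homology of the complex `(C⁺, δ)`. -/
abbrev Hlat {G : WGraph V} (δ : Cplus G →ₗ[ZMod 2] Cplus G) : Type _ :=
  LinearMap.ker δ ⧸ (LinearMap.range δ).comap (LinearMap.ker δ).subtype

/-- `𝒟₁ ⊆ C⁺(G)`: the `𝔽`-submodule generated by the `U^{−m}·((K,t),S)^∨` with `v ∈ S`. -/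
def D1 (G : WGraph V) (v : V) : Submodule (ZMod 2) (Cplus G) :=
  Submodule.span (ZMod 2)
    {χ | ∃ (K : G.Ch) (S : Finset V) (m : ℕ), v ∈ S ∧ χ = dual (K, S) m}

/-- `𝒟₂ ⊆ C⁺(G)`: the `𝔽`-submodule generated by the
`U^{−m}·[((K,t),S)^∨ + ((K,t+2),S)^∨]` with `v ∉ S`. -/
def D2 (G : WGraph V) (v : V) : Submodule (ZMod 2) (Cplus G) :=
  Submodule.span (ZMod 2)
    {χ | ∃ (K : G.Ch) (S : Finset V) (m : ℕ), v ∉ S ∧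
      χ = dual (K, S) m + dual (K.evenSh v 1, S) m}

/-!
Split the subsets `T ⊆ S` according to whether they contain `v`.  Writing `s = S − v`,
this gives `q(K,S) − q(K) = max a b` with `a = q(K,s) − q(K)` and `b` the contribution of
the subsets `T ∪ {v}`, which factor through `K + 2E_v`; so `r = a − b`.  Passing to
`G₊₁(v)` and `(K, t+2i+1)` leaves `q(K + 2E_T) − q(K)` unchanged when `v ∉ T` and lowers it
by exactly `i + 1` when `v ∈ T`, so `q'((K,t+2i+1),S) − q'(K,t+2i+1) = max a (b − (i+1))`.
Hence `c = max 0 (−r) − max 0 (−r − (i+1)) + i(i+1)/2`, and the four cases follow.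
-/

theorem Finset.sup'_powerset_insert {α β : Type*} [DecidableEq α] [SemilatticeSup β]
    (f : Finset α → β) (a : α) (s : Finset α) :
    (insert a s).powerset.sup' (insert a s).powerset_nonempty f =
      s.powerset.sup' s.powerset_nonempty f ⊔
        s.powerset.sup' s.powerset_nonempty fun T => f (insert a T) := by
  rw [Finset.sup'_congr _ (Finset.powerset_insert s a) fun _ _ => rfl,
    Finset.sup'_union _ (s.powerset_nonempty.image _), Finset.sup'_image]
  rfl

section

variable {V : Type*}

theorem eVec_insert [DecidableEq V] {v : V} {T : Finset V} (hv : v ∉ T) :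
    eVec (insert v T) = eVec T + eVec {v} := by
  funext u
  by_cases h : u = v
  · subst h; simp [eVec, hv]
  · simp [eVec, h]

variable [Fintype V]

theorem evalK_add (K x y : V → ℤ) : evalK K (x + y) = evalK K x + evalK K y := by
  simp [evalK, mul_add, Finset.sum_add_distrib]

namespace WGraph

variable {G : WGraph V}

theorem pair_add_left (x y z : V → ℤ) : G.pair (x + y) z = G.pair x z + G.pair y z := by
  simp [pair, mul_add, add_mul, Finset.sum_add_distrib]

theorem pair_comm (x y : V → ℤ) : G.pair x y = G.pair y x := by
  unfold pair
  rw [Finset.sum_comm]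
  refine Finset.sum_congr rfl fun u _ => Finset.sum_congr rfl fun w _ => ?_
  rw [G.symm w u]; ring

theorem pair_add_right (x y z : V → ℤ) : G.pair z (x + y) = G.pair z x + G.pair z y := by
  rw [pair_comm, pair_add_left, pair_comm x, pair_comm y]

theorem IsChar.two_dvd_evalK_add_pair {K : V → ℤ} (hK : G.IsChar K) (x : V → ℤ) :
    2 ∣ evalK K x + G.pair x x := by
  have := hK x
  simp only [Int.ModEq] at this
  omega

variable [DecidableEq V]

theorem pair_eVec_singleton (x : V → ℤ) (u : V) : G.pair x (eVec {u}) = ∑ w, G.M w u * x w := by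
  refine Finset.sum_congr rfl fun w _ => ?_
  simp [eVec, mul_comm]

theorem evalK_chAdd (K x y : V → ℤ) : evalK (G.chAdd K x) y = evalK K y + 2 * G.pair x y := by
  simp only [evalK, chAdd, pair_eVec_singleton, add_mul, Finset.sum_add_distrib, mul_assoc,
    ← Finset.mul_sum, Finset.sum_mul]
  rw [Finset.sum_comm]
  simp only [pair, mul_assoc]

theorem qdiff_insert {K : V → ℤ} (hK : G.IsChar K) {v : V} {T : Finset V} (hv : v ∉ T) :
    G.qdiff K (eVec (insert v T)) =
      G.qdiff K (eVec {v}) + G.qdiff (G.chAdd K (eVec {v})) (eVec T) := by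
  have hsplit : evalK K (eVec T + eVec {v}) + G.pair (eVec T + eVec {v}) (eVec T + eVec {v})
      = (evalK K (eVec {v}) + G.pair (eVec {v}) (eVec {v}))
        + (evalK (G.chAdd K (eVec {v})) (eVec T) + G.pair (eVec T) (eVec T)) := by
    rw [evalK_add, pair_add_left, pair_add_right, pair_add_right, evalK_chAdd,
      pair_comm (eVec T) (eVec {v})]
    ring
  obtain ⟨a, ha⟩ := hK.two_dvd_evalK_add_pair (eVec {v})
  obtain ⟨b, hb⟩ := (hK.chAdd (eVec {v})).two_dvd_evalK_add_pair (eVec T)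
  unfold qdiff
  rw [eVec_insert hv, hsplit]
  omega

theorem qdiff_bump_of_notMem (K : V → ℤ) (v : V) (i : ℤ) {T : Finset V} (hv : v ∉ T) :
    (G.bump v).qdiff (update K v (K v + (2 * i + 1))) (eVec T) = G.qdiff K (eVec T) := by
  have hT : eVec T v = 0 := by simp [eVec, hv]
  simp only [qdiff, evalK_update, pair_bump, hT]
  ring_nf

theorem qdiff_bump_of_mem {K : V → ℤ} (hK : G.IsChar K) (v : V) (i : ℤ) {T : Finset V}
    (hv : v ∈ T) :
    (G.bump v).qdiff (update K v (K v + (2 * i + 1))) (eVec T) =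
      G.qdiff K (eVec T) - (i + 1) := by
  have hT : eVec T v = 1 := by simp [eVec, hv]
  obtain ⟨a, ha⟩ := hK.two_dvd_evalK_add_pair (eVec T)
  simp only [qdiff, evalK_update, pair_bump, hT]
  omega

theorem qrel_insert {K : V → ℤ} (hK : G.IsChar K) {v : V} {s : Finset V} (hv : v ∉ s) :
    G.qrel K (insert v s) =
      max (G.qrel K s) (G.qdiff K (eVec {v}) + G.qrel (G.chAdd K (eVec {v})) s) := by
  unfold qrel
  rw [Finset.sup'_powerset_insert, Finset.add_sup']
  congr 1
  exact Finset.sup'_congr _ rfl fun T hT =>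
    qdiff_insert hK fun hvT => hv (Finset.mem_powerset.mp hT hvT)

theorem qrel_bump_insert {K : V → ℤ} (hK : G.IsChar K) {v : V} {s : Finset V} (hv : v ∉ s)
    (i : ℤ) :
    (G.bump v).qrel (update K v (K v + (2 * i + 1))) (insert v s) =
      max (G.qrel K s)
        (G.qdiff K (eVec {v}) + G.qrel (G.chAdd K (eVec {v})) s - (i + 1)) := by
  have hvT : ∀ T ∈ s.powerset, v ∉ T := fun T hT hvT => hv (Finset.mem_powerset.mp hT hvT)
  unfold qrel
  rw [Finset.sup'_powerset_insert, add_sub_right_comm, Finset.add_sup']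
  congr 1
  · exact Finset.sup'_congr _ rfl fun T hT => qdiff_bump_of_notMem K v i (hvT T hT)
  · refine Finset.sup'_congr _ rfl fun T hT => ?_
    rw [qdiff_bump_of_mem hK v i (Finset.mem_insert_self v T), qdiff_insert hK (hvT T hT)]
    ring

end WGraph

variable [DecidableEq V]

theorem cExp_eq_of_mem {G : WGraph V} {v : V} (K : G.Ch) {S : Finset V} (hv : v ∈ S) (i : ℤ) :
    cExp G v i K S =
      max 0 (-rVal G v K S) - max 0 (-(rVal G v K S + (i + 1))) + i * (i + 1) / 2 := by
  obtain ⟨s, hvs, rfl⟩ : ∃ s, v ∉ s ∧ S = insert v s :=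
    ⟨S.erase v, S.notMem_erase v, (Finset.insert_erase hv).symm⟩
  unfold cExp rVal
  rw [Finset.erase_insert hvs, WGraph.qrel_insert K.2 hvs, WGraph.Ch.bumpSh,
    WGraph.qrel_bump_insert K.2 hvs]
  omega

end

/-- If `v ∈ S` and `r = r((K,t),S)`, then `c(i,(K,t),S)` equals:
`i(i+1)/2` if `r ≥ max{0, −(i+1)}`; `(i+1)(i+2)/2` if `r ≤ min{0, −(i+1)}`;
`(i+1)(i+2)/2 + r` if `0 ≤ r ≤ −(i+1)`; and `i(i+1)/2 − r` if `−(i+1) ≤ r ≤ 0`. -/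
theorem cExp_cases (G : WGraph V) (v : V) (K : G.Ch) (S : Finset V) (hv : v ∈ S) (i : ℤ) :
    (max 0 (-(i + 1)) ≤ rVal G v K S → cExp G v i K S = i * (i + 1) / 2) ∧
    (rVal G v K S ≤ min 0 (-(i + 1)) → cExp G v i K S = (i + 1) * (i + 2) / 2) ∧
    (0 ≤ rVal G v K S ∧ rVal G v K S ≤ -(i + 1) →
      cExp G v i K S = (i + 1) * (i + 2) / 2 + rVal G v K S) ∧
    (-(i + 1) ≤ rVal G v K S ∧ rVal G v K S ≤ 0 →
      cExp G v i K S = i * (i + 1) / 2 - rVal G v K S) := by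
  rw [cExp_eq_of_mem K hv]
  obtain ⟨k, hk⟩ := Int.even_mul_succ_self i
  have hsucc : (i + 1) * (i + 2) = i * (i + 1) + 2 * (i + 1) := by ring
  rw [hsucc]
  omega

end
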